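/- For every ℓ ≥ 1, there exists a constant C (one may take C = φℓ + ℓ(φ-1) + 2) such that |a_n - ⌊(n+ℓ)φ⌋| ≤ C for all n ≥ 0; that is, the function λ_ℓ(n) := a_n - ⌊(n+ℓ)φ⌋ is bounded. -/

import Mathlib

/-!
Counting the numbers below `a n` (namely `0, …, ℓ`, the `a i` with `i < n`, and the `b i`
below `a n`) turns the recursion into `a n = n + ℓ + 1 + k` with `k = #{i | a i ≤ n}`, so
that `a (k - 1) ≤ n < a k`. By strong induction, `|a n - (n + ℓ) φ| ≤ C := 6 (ℓ + 1)`: the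
induction hypothesis at `k - 1` and `k` locates `(k + ℓ) φ` within `C` of `n`, and dividing
by `φ` (multiplying by `φ - 1 = φ⁻¹`) shrinks that error to `C / φ`. The new error is then
at most `C / φ + ℓ φ + 2`, which is at most `C` because `C - C / φ = C / φ² > 2 (ℓ + 1)`.
-/

/-- The minimum excluded value of a set of natural numbers. -/
noncomputable def mex (S : Set ℕ) : ℕ := sInf {m : ℕ | m ∉ S}

/-- `MexSeq ℓ a b` says that `a`, `b` are the sequences defined by
    `a 0 = ℓ+1`, `b 0 = 2ℓ+2`, and for `n ≥ 1`:
    `a n = mex({a i, b i : i < n} ∪ {0,…,ℓ})`, `b n = a n + n + ℓ + 1`. -/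
def MexSeq (ℓ : ℕ) (a b : ℕ → ℕ) : Prop :=
  a 0 = ℓ + 1 ∧ b 0 = 2 * ℓ + 2 ∧
  (∀ n : ℕ, 1 ≤ n →
    a n = mex ({m : ℕ | ∃ i < n, m = a i ∨ m = b i} ∪ {m : ℕ | m ≤ ℓ})) ∧
  (∀ n : ℕ, 1 ≤ n → b n = a n + n + ℓ + 1)

noncomputable def phi : ℝ := (1 + Real.sqrt 5) / 2

open Finset

lemma mex_notMem {S : Set ℕ} (hS : S.Finite) : mex S ∉ S :=
  Nat.sInf_mem hS.infinite_compl.nonempty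

lemma mem_of_lt_mex {S : Set ℕ} {m : ℕ} (h : m < mex S) : m ∈ S := by
  by_contra hm
  exact (Nat.sInf_le hm).not_gt h

lemma Monotone.lt_iff_lt_card_filter {f : ℕ → ℕ} (hf : Monotone f) {n t i : ℕ}
    (hi : i < n) : f i < t ↔ i < #{j ∈ range n | f j < t} := by
  constructor
  · intro h
    have : range (i + 1) ⊆ {j ∈ range n | f j < t} := fun j hj => by
      simp only [mem_range, mem_filter] at hj ⊢
      exact ⟨by omega, (hf (by omega)).trans_lt h⟩
    simpa using card_le_card this
  · intro h
    by_contra! h'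
    have : {j ∈ range n | f j < t} ⊆ range i := fun j hj => by
      simp only [mem_range, mem_filter] at hj ⊢
      exact hf.reflect_lt (hj.2.trans_le h')
    simpa using (card_le_card this).trans_lt' h

lemma phi_eq_goldenRatio : phi = Real.goldenRatio := rfl

lemma one_lt_phi : 1 < phi := Real.one_lt_goldenRatio

lemma phi_pos : 0 < phi := Real.goldenRatio_pos

lemma inv_phi : phi⁻¹ = phi - 1 := by
  rw [phi_eq_goldenRatio, Real.inv_goldenRatio, ← Real.one_sub_goldenRatio]
  ring

lemma phi_lt_five_thirds : phi < 5 / 3 := by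
  rw [phi_eq_goldenRatio]
  nlinarith [Real.goldenRatio_sq, Real.one_lt_goldenRatio]

lemma mul_phi_le_iff {x y : ℝ} : x * phi ≤ y ↔ x ≤ y * (phi - 1) := by
  rw [← inv_phi, ← div_eq_mul_inv, le_div_iff₀ phi_pos]

lemma le_mul_phi_iff {x y : ℝ} : y ≤ x * phi ↔ y * (phi - 1) ≤ x := by
  rw [← inv_phi, ← div_eq_mul_inv, div_le_iff₀ phi_pos]

lemma add_sub_mul_phi_le {n k ℓ : ℝ} (hℓ : 0 ≤ ℓ)
    (h : (k - 1 + ℓ) * phi - 6 * (ℓ + 1) ≤ n) :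
    n + ℓ + 1 + k - (n + ℓ) * phi ≤ 6 * (ℓ + 1) := by
  have := mul_phi_le_iff.mp (show (k - 1 + ℓ) * phi ≤ n + 6 * (ℓ + 1) by linarith)
  linarith [mul_nonneg hℓ (sub_pos.mpr phi_lt_five_thirds).le, phi_lt_five_thirds]

lemma neg_le_add_sub_mul_phi {n k ℓ : ℝ} (hℓ : 0 ≤ ℓ)
    (h : n < (k + ℓ) * phi + 6 * (ℓ + 1)) :
    -(6 * (ℓ + 1)) ≤ n + ℓ + 1 + k - (n + ℓ) * phi := by
  have := le_mul_phi_iff.mp (show n - 6 * (ℓ + 1) ≤ (k + ℓ) * phi by linarith)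
  linarith [mul_nonneg hℓ (sub_pos.mpr phi_lt_five_thirds).le, phi_lt_five_thirds]

namespace MexSeq

variable {ℓ : ℕ} {a b : ℕ → ℕ}

def excluded (ℓ : ℕ) (a b : ℕ → ℕ) (n : ℕ) : Set ℕ :=
  {m : ℕ | ∃ i < n, m = a i ∨ m = b i} ∪ {m : ℕ | m ≤ ℓ}

lemma excluded_finite (ℓ : ℕ) (a b : ℕ → ℕ) (n : ℕ) : (excluded ℓ a b n).Finite := by
  refine .union ?_ (Set.finite_le_nat ℓ)
  refine (((Set.finite_Iio n).image a).union ((Set.finite_Iio n).image b)).subset ?_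
  rintro m ⟨i, hi, rfl | rfl⟩
  exacts [.inl ⟨i, hi, rfl⟩, .inr ⟨i, hi, rfl⟩]

lemma excluded_mono (ℓ : ℕ) (a b : ℕ → ℕ) : Monotone (excluded ℓ a b) := by
  rintro n n' h m (⟨i, hi, hm⟩ | hm)
  exacts [.inl ⟨i, hi.trans_le h, hm⟩, .inr hm]

lemma b_eq (hab : MexSeq ℓ a b) (n : ℕ) : b n = a n + n + ℓ + 1 := by
  rcases Nat.eq_zero_or_pos n with rfl | hn
  · rw [hab.2.1, hab.1]; ring
  · exact hab.2.2.2 n hn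

lemma notMem_excluded (hab : MexSeq ℓ a b) (n : ℕ) : a n ∉ excluded ℓ a b n := by
  rcases Nat.eq_zero_or_pos n with rfl | hn
  · simp [excluded, hab.1]
  · rw [hab.2.2.1 n hn]
    exact mex_notMem (excluded_finite ℓ a b n)

lemma mem_excluded_of_lt (hab : MexSeq ℓ a b) {n m : ℕ} (hm : m < a n) :
    m ∈ excluded ℓ a b n := by
  rcases Nat.eq_zero_or_pos n with rfl | hn
  · rw [hab.1] at hm
    exact .inr (Nat.le_of_lt_succ hm)
  · exact mem_of_lt_mex (hab.2.2.1 n hn ▸ hm)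

lemma lt_a (hab : MexSeq ℓ a b) (n : ℕ) : ℓ < a n :=
  not_le.mp fun h => hab.notMem_excluded n (.inr h)

lemma strictMono_a (hab : MexSeq ℓ a b) : StrictMono a := by
  refine strictMono_nat_of_lt_succ fun n => lt_of_not_ge fun h => ?_
  refine hab.notMem_excluded (n + 1) ?_
  rcases h.lt_or_eq with h | h
  · exact excluded_mono ℓ a b n.le_succ (hab.mem_excluded_of_lt h)
  · exact .inl ⟨n, n.lt_succ_self, .inl h⟩

lemma strictMono_b (hab : MexSeq ℓ a b) : StrictMono b := by
  refine strictMono_nat_of_lt_succ fun n => ?_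
  have := hab.strictMono_a (Nat.lt_add_one n)
  rw [hab.b_eq n, hab.b_eq (n + 1)]
  omega

lemma a_ne_b (hab : MexSeq ℓ a b) (i j : ℕ) : a i ≠ b j := by
  rcases le_or_gt i j with h | h
  · have := hab.strictMono_a.monotone h
    rw [hab.b_eq]
    omega
  · exact fun he => hab.notMem_excluded i (.inl ⟨j, h, .inr he⟩)

lemma a_eq_add_card (hab : MexSeq ℓ a b) (n : ℕ) :
    a n = n + ℓ + 1 + #{i ∈ range n | b i < a n} := by
  have hcover : range (a n) =
      (range (ℓ + 1) ∪ (range n).image a) ∪ {i ∈ range n | b i < a n}.image b := by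
    ext m
    simp only [mem_union, mem_image, mem_range, mem_filter]
    constructor
    · intro hm
      rcases hab.mem_excluded_of_lt hm with ⟨i, hi, rfl | rfl⟩ | h
      · exact .inl (.inr ⟨i, hi, rfl⟩)
      · exact .inr ⟨i, ⟨hi, hm⟩, rfl⟩
      · exact .inl (.inl (Nat.lt_succ_of_le h))
    · rintro ((h | ⟨i, hi, rfl⟩) | ⟨i, ⟨-, hi⟩, rfl⟩)
      · exact h.trans_le (hab.lt_a n)
      · exact hab.strictMono_a hi
      · exact hi
  have hdisj₁ : Disjoint (range (ℓ + 1)) ((range n).image a) := by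
    simp only [disjoint_left, mem_range, mem_image, not_exists, not_and]
    intro m hm i _ rfl
    exact (hab.lt_a i).not_ge (Nat.le_of_lt_succ hm)
  have hdisj₂ : Disjoint (range (ℓ + 1) ∪ (range n).image a)
      ({i ∈ range n | b i < a n}.image b) := by
    simp only [disjoint_left, mem_union, mem_range, mem_image, not_exists, not_and]
    rintro m (hm | ⟨i, -, rfl⟩) j - hj
    · have := hab.b_eq j
      omega
    · exact hab.a_ne_b i j hj.symm
  have := congrArg card hcover
  rw [card_union_of_disjoint hdisj₂, card_union_of_disjoint hdisj₁,
    card_image_of_injective _ hab.strictMono_a.injective,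
    card_image_of_injective _ hab.strictMono_b.injective, card_range, card_range,
    card_range] at this
  omega

lemma exists_a_eq_add (hab : MexSeq ℓ a b) (n : ℕ) :
    ∃ k, a n = n + ℓ + 1 + k ∧ ∀ i, a i ≤ n ↔ i < k := by
  set k := #{i ∈ range n | b i < a n}
  have hcount := hab.a_eq_add_card n
  have hb : ∀ i < n, b i < a n ↔ i < k := fun i hi =>
    hab.strictMono_b.monotone.lt_iff_lt_card_filter hi
  have hkn : k ≤ n := (card_filter_le _ _).trans (card_range n).le
  refine ⟨k, hcount, fun i => ⟨fun hi => ?_, fun hi => ?_⟩⟩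
  · have hin : i < n := hab.strictMono_a.lt_iff_lt.mp (hi.trans_lt (by omega))
    by_contra! hki
    have hbk : a n < b k := lt_of_le_of_ne
      (not_lt.mp fun h => (hb k (hki.trans_lt hin) |>.mp h).false) (hab.a_ne_b n k)
    have := hab.strictMono_a.monotone hki
    rw [hab.b_eq] at hbk
    omega
  · obtain ⟨j, hj⟩ := Nat.exists_eq_add_of_lt hi
    have hbj := (hb (i + j) (by omega)).mpr (by omega)
    have := hab.strictMono_a.monotone (Nat.le_add_right i j)
    rw [hab.b_eq] at hbj
    omega

theorem abs_sub_mul_phi_le (hab : MexSeq ℓ a b) (n : ℕ) :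
    |(a n : ℝ) - (n + ℓ) * phi| ≤ 6 * (ℓ + 1) := by
  induction n using Nat.strong_induction_on with
  | _ n ih =>
  obtain ⟨k, ha, hk⟩ := hab.exists_a_eq_add n
  have hkn : k ≤ n := not_lt.mp fun h => ((hk n).mpr h).not_gt (by omega)
  have hnℓ : (0 : ℝ) ≤ n + ℓ := by positivity
  rw [ha, abs_le]
  push_cast
  constructor
  · rcases hkn.lt_or_eq with hlt | rfl
    · have hak : (n : ℝ) < a k := by exact_mod_cast not_le.mp fun h => ((hk k).mp h).false
      have := (abs_le.mp (ih k hlt)).2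
      exact neg_le_add_sub_mul_phi (n := n) (k := k) ℓ.cast_nonneg (by linarith)
    · linarith [mul_le_mul_of_nonneg_left phi_lt_five_thirds.le hnℓ]
  · rcases Nat.eq_zero_or_pos k with rfl | hk0
    · rw [Nat.cast_zero]
      linarith [mul_le_mul_of_nonneg_left one_lt_phi.le hnℓ]
    · have haj : (a (k - 1) : ℝ) ≤ n := by exact_mod_cast (hk (k - 1)).mpr (by omega)
      have := (abs_le.mp (ih (k - 1) (by omega))).1
      push_cast [hk0] at this
      exact add_sub_mul_phi_le (n := n) (k := k) ℓ.cast_nonneg (by linarith)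

end MexSeq

theorem mexSeq_bounded_discrepancy_general (ℓ : ℕ) (a b : ℕ → ℕ)
    (hab : MexSeq ℓ a b) :
    ∃ C : ℝ, ∀ n : ℕ, |(a n : ℝ) - ⌊((n : ℝ) + ℓ) * phi⌋| ≤ C := by
  refine ⟨6 * (ℓ + 1) + 1, fun n => ?_⟩
  set x : ℝ := ((n : ℝ) + ℓ) * phi
  calc |(a n : ℝ) - ⌊x⌋| ≤ |(a n : ℝ) - x| + |x - ⌊x⌋| := abs_sub_le _ _ _
    _ ≤ 6 * (ℓ + 1) + 1 := by
        rw [Int.self_sub_floor, Int.abs_fract]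
        exact add_le_add (hab.abs_sub_mul_phi_le n) (Int.fract_lt_one x).le

theorem mexSeq_bounded_discrepancy (ℓ : ℕ) (hℓ : 1 ≤ ℓ) (a b : ℕ → ℕ)
    (hab : MexSeq ℓ a b) :
    ∃ C : ℝ, ∀ n : ℕ, |(a n : ℝ) - ⌊((n : ℝ) + ℓ) * phi⌋| ≤ C :=
  mexSeq_bounded_discrepancy_general ℓ a b hab
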